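/- arXiv:1802.00091 — 5 statements merged into one kernel-verified Lean document; each statement's English description precedes it below -/
import Mathlib

section
/- A number λ ∈ ℂ is an eigenvalue (i.e., there exists a nonzero solution of b₀y'' + b₁y' = λy satisfying the jump boundary conditions) if and only if Δ(λ) = 0. -/
open MeasureTheory Set

noncomputable section

/-- `(l - lam) y = f` on `(0,1)`: `y` has derivative `y'`, `y'` has an integrable
derivative `g` (absolute continuity), and `b₀ g + b₁ y' - lam y = f` a.e. on `(0,1)`. -/
def IsSolAux (b₀ b₁ : ℝ → ℝ) (lam : ℂ) (f : ℝ → ℂ) (y y' : ℝ → ℂ) : Prop :=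
  ∃ g : ℝ → ℂ, IntegrableOn g (Ioo 0 1) volume ∧
    (∀ x ∈ Icc (0:ℝ) 1, y x = y 0 + ∫ t in (0:ℝ)..x, y' t) ∧
    (∀ x ∈ Icc (0:ℝ) 1, y' x = y' 0 + ∫ t in (0:ℝ)..x, g t) ∧
    (∀ᵐ x ∂(volume.restrict (Ioo (0:ℝ) 1)),
      (b₀ x : ℂ) * g x + (b₁ x : ℂ) * y' x - lam * y x = f x)

/-- `y` (with derivative `y'`) is a solution of `b₀ y'' + b₁ y' = lam y` on `[0,1]`. -/
def IsSol (b₀ b₁ : ℝ → ℝ) (lam : ℂ) (y y' : ℝ → ℂ) : Prop :=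
  IsSolAux b₀ b₁ lam 0 y y'

/-- The standing assumptions on the coefficients `b₀`, `b₁`. -/
def CoeffOK (b₀ b₁ : ℝ → ℝ) : Prop :=
  Measurable b₀ ∧ Measurable b₁ ∧
    (∀ᵐ x ∂(volume.restrict (Ioo (0:ℝ) 1)), b₀ x < 0) ∧
    IntegrableOn (fun x => 1 / b₀ x) (Ioo 0 1) volume ∧
    IntegrableOn (fun x => b₁ x / b₀ x) (Ioo 0 1) volume

/-!
A solution is determined on `[0,1]` by `(y 0, y' 0)`: if both vanish, then `v = ‖y‖ + ‖y'‖`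
satisfies `v x ≤ ∫₀ˣ v · (1 + ‖λ‖ ‖1/b₀‖ + ‖b₁/b₀‖)`, and since the weight is integrable a
Gronwall argument gives `v = 0`. So the solutions are exactly the combinations
`c₀ y₁ + c₁ y₂`, and such a combination satisfies the jump conditions iff `c ᵥ* M = 0`, where the
rows of `M` are the boundary defects of `y₁` and `y₂` and `det M = Δ(λ)`. A combination with
`c ≠ 0` does not vanish on `[0,1]`, because `c₀ = y(0)` and `c₁` is its right derivative at `0`.
-/

open Filter Topology
open scoped Matrix

section IntegralRepresentation

variable {a b : ℝ}

theorem continuousOn_of_eq_add_integral {E : Type*} [NormedAddCommGroup E] [NormedSpace ℝ E]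
    {f F : ℝ → E} (hf : IntegrableOn f (Icc a b))
    (hF : ∀ x ∈ Icc a b, F x = F a + ∫ t in a..x, f t) : ContinuousOn F (Icc a b) := by
  rcases le_or_gt a b with hab | hba
  · have := intervalIntegral.continuousOn_primitive_interval (hf.mono_set (uIcc_of_le hab).subset)
    rw [uIcc_of_le hab] at this
    exact (continuousOn_const.add this).congr hF
  · simp [Icc_eq_empty_of_lt hba]

theorem hasDerivWithinAt_of_eq_add_integral {E : Type*} [NormedAddCommGroup E]
    [NormedSpace ℝ E] [CompleteSpace E] {f F : ℝ → E} (hab : a < b)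
    (hf : ContinuousOn f (Icc a b)) (hF : ∀ x ∈ Icc a b, F x = F a + ∫ t in a..x, f t) :
    HasDerivWithinAt F (f a) (Icc a b) a := by
  have ha : a ∈ Icc a b := left_mem_Icc.2 hab.le
  have : Fact (a ∈ Icc a b) := ⟨ha⟩
  have hprim := intervalIntegral.integral_hasDerivWithinAt_right (s := Icc a b)
    IntervalIntegrable.refl (hf.stronglyMeasurableAtFilter_nhdsWithin measurableSet_Icc a) (hf a ha)
  exact (hprim.const_add (F a)).congr_of_mem hF ha

theorem eq_add_integral_lincomb {f F g G : ℝ → ℂ} (hf : IntegrableOn f (Icc a b))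
    (hg : IntegrableOn g (Icc a b)) (hF : ∀ x ∈ Icc a b, F x = F a + ∫ t in a..x, f t)
    (hG : ∀ x ∈ Icc a b, G x = G a + ∫ t in a..x, g t) (c d : ℂ) :
    ∀ x ∈ Icc a b, c * F x + d * G x = (c * F a + d * G a) + ∫ t in a..x, (c * f t + d * g t) := by
  intro x hx
  have hsub : uIcc a x ⊆ Icc a b := uIcc_subset_Icc (left_mem_Icc.2 (hx.1.trans hx.2)) hx
  rw [intervalIntegral.integral_add ((hf.mono_set hsub).intervalIntegrable.const_mul c)
    ((hg.mono_set hsub).intervalIntegrable.const_mul d), intervalIntegral.integral_const_mul,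
    intervalIntegral.integral_const_mul, hF x hx, hG x hx]
  ring

end IntegralRepresentation

theorem norm_le_of_mul_add_mul_sub_mul_eq_zero {β₀ β₁ : ℝ} {lam g p q : ℂ} (hβ : β₀ ≠ 0)
    (h : (β₀ : ℂ) * g + β₁ * p - lam * q = 0) :
    ‖g‖ ≤ ‖lam‖ * ‖1 / β₀‖ * ‖q‖ + ‖β₁ / β₀‖ * ‖p‖ := by
  have hg : g = lam * q * ((1 / β₀ : ℝ) : ℂ) - ((β₁ / β₀ : ℝ) : ℂ) * p := by
    have : (β₀ : ℂ) ≠ 0 := Complex.ofReal_ne_zero.2 hβ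
    push_cast
    field_simp
    linear_combination h
  calc ‖g‖ ≤ ‖lam * q * ((1 / β₀ : ℝ) : ℂ)‖ + ‖((β₁ / β₀ : ℝ) : ℂ) * p‖ := hg ▸ norm_sub_le _ _
    _ = ‖lam‖ * ‖1 / β₀‖ * ‖q‖ + ‖β₁ / β₀‖ * ‖p‖ := by
      simp only [norm_mul, Complex.norm_real]; ring

section Gronwall

variable {a b : ℝ}

theorem eqOn_zero_of_sub_le_mul_integral {F h : ℝ → ℝ}
    (hF : ContinuousOn F (Icc a b)) (hFa : F a = 0) (hF0 : ∀ x ∈ Icc a b, 0 ≤ F x)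
    (hh : IntegrableOn h (Icc a b))
    (hstep : ∀ x ∈ Icc a b, ∀ y ∈ Icc a b, x ≤ y → F y - F x ≤ F y * ∫ t in x..y, h t) :
    EqOn F 0 (Icc a b) := by
  suffices Icc a b ⊆ F ⁻¹' {0} from fun x hx => this hx
  refine IsClosed.Icc_subset_of_forall_mem_nhdsWithin ?_ hFa ?_
  · rw [inter_comm]
    exact hF.preimage_isClosed_of_isClosed isClosed_Icc isClosed_singleton
  rintro x ⟨hFx, hax, hxb⟩
  have hx : x ∈ Icc a b := ⟨hax, hxb.le⟩
  have hH : ContinuousWithinAt (fun y => ∫ t in x..y, h t) (Icc x b) x := by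
    have := intervalIntegral.continuousOn_primitive_interval
      (hh.mono_set (uIcc_subset_Icc hx (right_mem_Icc.2 (hax.trans hxb.le))))
    rw [uIcc_of_le hxb.le] at this
    exact this x (left_mem_Icc.2 hxb.le)
  have hH1 : ∀ᶠ y in 𝓝[≥] x, ∫ t in x..y, h t < 1 := by
    rw [← nhdsWithin_Icc_eq_nhdsGE hxb]
    exact hH.eventually_lt_const (by simp)
  refine nhdsWithin_mono x Ioi_subset_Ici_self ?_
  filter_upwards [hH1, Icc_mem_nhdsGE hxb] with y hHy hy
  have hy' : y ∈ Icc a b := ⟨hax.trans hy.1, hy.2⟩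
  have := hstep x hx y hy' hy.1
  have := hF0 y hy'
  simp only [mem_preimage, mem_singleton_iff] at hFx ⊢
  -- `0 ≤ F y * (1 - ∫ t in x..y, h t) ≤ F x = 0` with a positive second factor
  nlinarith

theorem eqOn_zero_of_le_integral_mul {v h : ℝ → ℝ}
    (hv : ContinuousOn v (Icc a b)) (hv0 : ∀ x ∈ Icc a b, 0 ≤ v x)
    (hh : IntegrableOn h (Icc a b)) (hh0 : ∀ x ∈ Icc a b, 0 ≤ h x)
    (hle : ∀ x ∈ Icc a b, v x ≤ ∫ t in a..x, v t * h t) : EqOn v 0 (Icc a b) := by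
  intro z hz
  have hab : a ≤ b := hz.1.trans hz.2
  set F : ℝ → ℝ := fun x => ∫ t in a..x, v t * h t
  have hvh : IntegrableOn (fun t => v t * h t) (Icc a b) := hh.continuousOn_mul hv isCompact_Icc
  have hvh0 : ∀ t ∈ Icc a b, 0 ≤ v t * h t := fun t ht => mul_nonneg (hv0 t ht) (hh0 t ht)
  have hii : ∀ {f : ℝ → ℝ}, IntegrableOn f (Icc a b) → ∀ x ∈ Icc a b, ∀ y ∈ Icc a b,
      IntervalIntegrable f volume x y := fun hf x hx y hy =>
    (hf.mono_set (uIcc_subset_Icc hx hy)).intervalIntegrable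
  have hFc : ContinuousOn F (Icc a b) := by
    simpa only [uIcc_of_le hab] using
      intervalIntegral.continuousOn_primitive_interval (hvh.mono_set (uIcc_of_le hab).subset)
  have hFsub : ∀ x ∈ Icc a b, ∀ y ∈ Icc a b, F y - F x = ∫ t in x..y, v t * h t :=
    fun x hx y hy => intervalIntegral.integral_interval_sub_left
      (hii hvh a (left_mem_Icc.2 hab) y hy) (hii hvh a (left_mem_Icc.2 hab) x hx)
  have hF0 : ∀ x ∈ Icc a b, 0 ≤ F x := fun x hx =>
    intervalIntegral.integral_nonneg hx.1 fun t ht => hvh0 t ⟨ht.1, ht.2.trans hx.2⟩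
  have hstep : ∀ x ∈ Icc a b, ∀ y ∈ Icc a b, x ≤ y → F y - F x ≤ F y * ∫ t in x..y, h t := by
    intro x hx y hy hxy
    have hsub : Icc x y ⊆ Icc a b := Icc_subset_Icc hx.1 hy.2
    rw [hFsub x hx y hy, ← intervalIntegral.integral_const_mul]
    refine intervalIntegral.integral_mono_on hxy (hii hvh x hx y hy)
      ((hii hh x hx y hy).const_mul _) fun t ht => ?_
    have hFt : F t ≤ F y := by
      have := intervalIntegral.integral_nonneg (μ := volume) ht.2 fun s hs =>
        hvh0 s (hsub ⟨ht.1.trans hs.1, hs.2⟩)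
      linarith [hFsub t (hsub ht) y hy]
    exact mul_le_mul_of_nonneg_right ((hle t (hsub ht)).trans hFt) (hh0 t (hsub ht))
  have hF : F z = 0 := eqOn_zero_of_sub_le_mul_integral hFc (by simp [F]) hF0 hh hstep hz
  exact le_antisymm ((hle z hz).trans_eq hF) (hv0 z hz)

end Gronwall

def gronwallWeight (b₀ b₁ : ℝ → ℝ) (lam : ℂ) (t : ℝ) : ℝ :=
  1 + ‖lam‖ * ‖1 / b₀ t‖ + ‖b₁ t / b₀ t‖

theorem CoeffOK.integrableOn_gronwallWeight {b₀ b₁ : ℝ → ℝ} (hco : CoeffOK b₀ b₁) (lam : ℂ) :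
    IntegrableOn (gronwallWeight b₀ b₁ lam) (Icc 0 1) :=
  (integrableOn_Icc_iff_integrableOn_Ioo).2 (((integrableOn_const measure_Ioo_lt_top.ne).add
    (hco.2.2.2.1.norm.const_mul _)).add hco.2.2.2.2.norm)

namespace IsSol

variable {b₀ b₁ : ℝ → ℝ} {lam : ℂ} {y y' z z' : ℝ → ℂ}

theorem continuousOn_deriv (hy : IsSol b₀ b₁ lam y y') : ContinuousOn y' (Icc 0 1) := by
  obtain ⟨g, hg, -, hy', -⟩ := hy
  exact continuousOn_of_eq_add_integral ((integrableOn_Icc_iff_integrableOn_Ioo).2 hg) hy'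

theorem continuousOn (hy : IsSol b₀ b₁ lam y y') : ContinuousOn y (Icc 0 1) := by
  have hy'c := hy.continuousOn_deriv
  obtain ⟨-, -, hy₀, -, -⟩ := hy
  exact continuousOn_of_eq_add_integral hy'c.integrableOn_Icc hy₀

theorem lincomb (hy : IsSol b₀ b₁ lam y y') (hz : IsSol b₀ b₁ lam z z') (c d : ℂ) :
    IsSol b₀ b₁ lam (fun x => c * y x + d * z x) (fun x => c * y' x + d * z' x) := by
  have hy'c := hy.continuousOn_deriv
  have hz'c := hz.continuousOn_deriv
  obtain ⟨gy, hgy, hy₀, hy₁, hy₂⟩ := hy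
  obtain ⟨gz, hgz, hz₀, hz₁, hz₂⟩ := hz
  refine ⟨fun x => c * gy x + d * gz x, (hgy.const_mul c).add (hgz.const_mul d),
    eq_add_integral_lincomb hy'c.integrableOn_Icc hz'c.integrableOn_Icc hy₀ hz₀ c d,
    eq_add_integral_lincomb ((integrableOn_Icc_iff_integrableOn_Ioo).2 hgy)
      ((integrableOn_Icc_iff_integrableOn_Ioo).2 hgz) hy₁ hz₁ c d, ?_⟩
  filter_upwards [hy₂, hz₂] with x hyx hzx
  simp only [Pi.zero_apply] at hyx hzx ⊢
  linear_combination c * hyx + d * hzx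

theorem deriv_zero_eq_zero_of_eqOn_zero (hy : IsSol b₀ b₁ lam y y')
    (h : EqOn y 0 (Icc 0 1)) : y' 0 = 0 := by
  have hy'c := hy.continuousOn_deriv
  obtain ⟨g, -, hy₀, -, -⟩ := hy
  have hderiv := hasDerivWithinAt_of_eq_add_integral zero_lt_one hy'c hy₀
  have hzero : HasDerivWithinAt y 0 (Icc 0 1) 0 :=
    (hasDerivWithinAt_const _ _ 0).congr_of_mem h (left_mem_Icc.2 zero_le_one)
  exact (uniqueDiffOn_Icc_zero_one 0 (left_mem_Icc.2 zero_le_one)).eq_deriv _ hderiv hzero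

theorem norm_add_norm_deriv_le_integral (hco : CoeffOK b₀ b₁) (hy : IsSol b₀ b₁ lam y y')
    (h0 : y 0 = 0) (h0' : y' 0 = 0) :
    ∀ x ∈ Icc (0:ℝ) 1, ‖y x‖ + ‖y' x‖ ≤
      ∫ t in 0..x, (‖y t‖ + ‖y' t‖) * gronwallWeight b₀ b₁ lam t := by
  have hyc := hy.continuousOn
  have hy'c := hy.continuousOn_deriv
  obtain ⟨g, hg, hy₀, hy₁, hy₂⟩ := hy
  have hbound : ∀ᵐ t ∂volume.restrict (Icc 0 1),
      ‖y' t‖ + ‖g t‖ ≤ (‖y t‖ + ‖y' t‖) * gronwallWeight b₀ b₁ lam t := by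
    rw [← Measure.restrict_congr_set Ioo_ae_eq_Icc]
    filter_upwards [hy₂, hco.2.2.1] with t ht hbt
    have := norm_le_of_mul_add_mul_sub_mul_eq_zero hbt.ne ht
    have := mul_nonneg (norm_nonneg lam) (norm_nonneg (1 / b₀ t))
    have := norm_nonneg (b₁ t / b₀ t)
    have := norm_nonneg (y t)
    have := norm_nonneg (y' t)
    simp only [gronwallWeight]
    nlinarith
  intro x hx
  have hsub : uIcc 0 x ⊆ Icc (0:ℝ) 1 := uIcc_subset_Icc (left_mem_Icc.2 zero_le_one) hx
  have hy'i := ((hy'c.integrableOn_Icc (μ := volume)).mono_set hsub).intervalIntegrable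
  have hgi := (((integrableOn_Icc_iff_integrableOn_Ioo).2 hg).mono_set hsub).intervalIntegrable
  calc ‖y x‖ + ‖y' x‖ ≤ (∫ t in 0..x, ‖y' t‖) + ∫ t in 0..x, ‖g t‖ := by
        rw [hy₀ x hx, hy₁ x hx, h0, h0', zero_add, zero_add]
        exact add_le_add (intervalIntegral.norm_integral_le_integral_norm hx.1)
          (intervalIntegral.norm_integral_le_integral_norm hx.1)
    _ = ∫ t in 0..x, (‖y' t‖ + ‖g t‖) := (intervalIntegral.integral_add hy'i.norm hgi.norm).symm
    _ ≤ ∫ t in 0..x, (‖y t‖ + ‖y' t‖) * gronwallWeight b₀ b₁ lam t := by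
      refine intervalIntegral.integral_mono_ae_restrict hx.1 (hy'i.norm.add hgi.norm)
        (((hco.integrableOn_gronwallWeight lam).continuousOn_mul (hyc.norm.add hy'c.norm)
          isCompact_Icc).mono_set hsub).intervalIntegrable ?_
      rw [uIcc_of_le hx.1] at hsub
      exact ae_restrict_of_ae_restrict_of_subset hsub hbound

theorem eqOn_zero (hco : CoeffOK b₀ b₁) (hy : IsSol b₀ b₁ lam y y') (h0 : y 0 = 0)
    (h0' : y' 0 = 0) : EqOn y 0 (Icc 0 1) := by
  intro x hx
  have hv := eqOn_zero_of_le_integral_mul (hy.continuousOn.norm.add hy.continuousOn_deriv.norm)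
    (fun t _ => add_nonneg (norm_nonneg _) (norm_nonneg _)) (hco.integrableOn_gronwallWeight lam)
    (fun t _ => by simp only [gronwallWeight]; positivity)
    (hy.norm_add_norm_deriv_le_integral hco h0 h0') hx
  simpa using ((add_eq_zero_iff_of_nonneg (norm_nonneg _) (norm_nonneg _)).1 hv).1

theorem eqOn_of_initial (hco : CoeffOK b₀ b₁) (hy : IsSol b₀ b₁ lam y y')
    (hz : IsSol b₀ b₁ lam z z') (h0 : y 0 = z 0) (h0' : y' 0 = z' 0) : EqOn y z (Icc 0 1) := by
  intro x hx
  have := (hy.lincomb hz 1 (-1)).eqOn_zero hco (by simp [h0]) (by simp [h0']) hx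
  simpa [sub_eq_zero, ← sub_eq_add_neg] using this

end IsSol

theorem integrable_of_continuousOn_Icc {E : Type*} [NormedAddCommGroup E] {ν : Measure ℝ}
    [IsFiniteMeasure ν] {a b : ℝ} (hν : ∀ᵐ x ∂ν, x ∈ Icc a b) {u : ℝ → E}
    (hu : ContinuousOn u (Icc a b)) : Integrable u ν := by
  rw [← Measure.restrict_eq_self_of_ae_mem hν]
  exact hu.integrableOn_Icc

def jumpDefect (ν₀ ν₁ : Measure ℝ) (y : ℝ → ℂ) : Fin 2 → ℂ :=
  ![(∫ x, y x ∂ν₀) - y 0, (∫ x, y x ∂ν₁) - y 1]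

section JumpDefect

variable {ν₀ ν₁ : Measure ℝ}

theorem jumpDefect_eq_zero_iff {y : ℝ → ℂ} :
    jumpDefect ν₀ ν₁ y = 0 ↔ y 0 = ∫ x, y x ∂ν₀ ∧ y 1 = ∫ x, y x ∂ν₁ := by
  simp [jumpDefect, funext_iff, Fin.forall_fin_two, sub_eq_zero, eq_comm (a := y 0),
    eq_comm (a := y 1)]

theorem jumpDefect_congr (hν₀ : ∀ᵐ x ∂ν₀, x ∈ Icc (0:ℝ) 1) (hν₁ : ∀ᵐ x ∂ν₁, x ∈ Icc (0:ℝ) 1)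
    {y z : ℝ → ℂ} (h : EqOn y z (Icc 0 1)) : jumpDefect ν₀ ν₁ y = jumpDefect ν₀ ν₁ z := by
  have hint : ∀ {ν : Measure ℝ}, (∀ᵐ x ∂ν, x ∈ Icc (0:ℝ) 1) → ∫ x, y x ∂ν = ∫ x, z x ∂ν :=
    fun hν => integral_congr_ae (hν.mono fun x hx => h hx)
  simp only [jumpDefect, hint hν₀, hint hν₁, h (left_mem_Icc.2 zero_le_one),
    h (right_mem_Icc.2 zero_le_one)]

theorem jumpDefect_lincomb [IsFiniteMeasure ν₀] [IsFiniteMeasure ν₁]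
    (hν₀ : ∀ᵐ x ∂ν₀, x ∈ Icc (0:ℝ) 1) (hν₁ : ∀ᵐ x ∂ν₁, x ∈ Icc (0:ℝ) 1) {u₁ u₂ : ℝ → ℂ}
    (hu₁ : ContinuousOn u₁ (Icc 0 1)) (hu₂ : ContinuousOn u₂ (Icc 0 1)) (c : Fin 2 → ℂ) :
    jumpDefect ν₀ ν₁ (fun x => c 0 * u₁ x + c 1 * u₂ x) =
      c ᵥ* Matrix.of ![jumpDefect ν₀ ν₁ u₁, jumpDefect ν₀ ν₁ u₂] := by
  have hint : ∀ {ν : Measure ℝ} [IsFiniteMeasure ν], (∀ᵐ x ∂ν, x ∈ Icc (0:ℝ) 1) →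
      ∫ x, (c 0 * u₁ x + c 1 * u₂ x) ∂ν = c 0 * (∫ x, u₁ x ∂ν) + c 1 * ∫ x, u₂ x ∂ν := by
    intro ν _ hν
    rw [integral_add ((integrable_of_continuousOn_Icc hν hu₁).const_mul _)
      ((integrable_of_continuousOn_Icc hν hu₂).const_mul _), integral_const_mul,
      integral_const_mul]
  ext i
  fin_cases i <;>
  · simp [jumpDefect, Matrix.vecMul, dotProduct, Fin.sum_univ_two, hint hν₀, hint hν₁]
    ring

end JumpDefect

theorem stmt3 (b₀ b₁ : ℝ → ℝ) (hco : CoeffOK b₀ b₁)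
    (ν₀ ν₁ : Measure ℝ) [IsProbabilityMeasure ν₀] [IsProbabilityMeasure ν₁]
    (hν₀ : ν₀ (Ioo (0:ℝ) 1)ᶜ = 0) (hν₁ : ν₁ (Ioo (0:ℝ) 1)ᶜ = 0)
    (Y₁ Y₁' Y₂ Y₂' : ℂ → ℝ → ℂ)
    (hY₁ : ∀ lam : ℂ, IsSol b₀ b₁ lam (Y₁ lam) (Y₁' lam) ∧ Y₁ lam 0 = 1 ∧ Y₁' lam 0 = 0)
    (hY₂ : ∀ lam : ℂ, IsSol b₀ b₁ lam (Y₂ lam) (Y₂' lam) ∧ Y₂ lam 0 = 0 ∧ Y₂' lam 0 = 1)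
    (lam : ℂ) :
    -- `lam` is an eigenvalue
    (∃ y y' : ℝ → ℂ, IsSol b₀ b₁ lam y y' ∧ (∃ x ∈ Icc (0:ℝ) 1, y x ≠ 0) ∧
        y 0 = ∫ x, y x ∂ν₀ ∧ y 1 = ∫ x, y x ∂ν₁) ↔
    -- if and only if `Δ(lam) = 0`
    ((∫ x, Y₁ lam x ∂ν₀) - 1) * ((∫ x, Y₂ lam x ∂ν₁) - Y₂ lam 1) -
        (∫ x, Y₂ lam x ∂ν₀) * ((∫ x, Y₁ lam x ∂ν₁) - Y₁ lam 1) = 0 := by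
  obtain ⟨hY₁sol, hY₁0, hY₁'0⟩ := hY₁ lam
  obtain ⟨hY₂sol, hY₂0, hY₂'0⟩ := hY₂ lam
  have hν₀' : ∀ᵐ x ∂ν₀, x ∈ Icc (0:ℝ) 1 :=
    mem_of_superset (mem_ae_iff.2 hν₀) Ioo_subset_Icc_self
  have hν₁' : ∀ᵐ x ∂ν₁, x ∈ Icc (0:ℝ) 1 :=
    mem_of_superset (mem_ae_iff.2 hν₁) Ioo_subset_Icc_self
  set M : Matrix (Fin 2) (Fin 2) ℂ :=
    Matrix.of ![jumpDefect ν₀ ν₁ (Y₁ lam), jumpDefect ν₀ ν₁ (Y₂ lam)]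
  set z : (Fin 2 → ℂ) → ℝ → ℂ := fun c x => c 0 * Y₁ lam x + c 1 * Y₂ lam x
  have hz (c : Fin 2 → ℂ) :
      IsSol b₀ b₁ lam (z c) (fun x => c 0 * Y₁' lam x + c 1 * Y₂' lam x) :=
    hY₁sol.lincomb hY₂sol (c 0) (c 1)
  have hMz : ∀ c, jumpDefect ν₀ ν₁ (z c) = c ᵥ* M :=
    jumpDefect_lincomb hν₀' hν₁' hY₁sol.continuousOn hY₂sol.continuousOn
  have hΔ : ((∫ x, Y₁ lam x ∂ν₀) - 1) * ((∫ x, Y₂ lam x ∂ν₁) - Y₂ lam 1) -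
      (∫ x, Y₂ lam x ∂ν₀) * ((∫ x, Y₁ lam x ∂ν₁) - Y₁ lam 1) = M.det := by
    simp [M, jumpDefect, Matrix.det_fin_two, hY₁0, hY₂0]
    ring
  rw [hΔ, ← Matrix.exists_vecMul_eq_zero_iff]
  constructor
  · rintro ⟨y, y', hy, ⟨x, hx, hyx⟩, hbc⟩
    have hyz : EqOn y (z ![y 0, y' 0]) (Icc 0 1) :=
      hy.eqOn_of_initial hco (hz _) (by simp [z, hY₁0, hY₂0]) (by simp [hY₁'0, hY₂'0])
    refine ⟨![y 0, y' 0],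
      fun hc => hyx (hy.eqOn_zero hco (congrFun hc 0) (congrFun hc 1) hx), ?_⟩
    rw [← hMz, ← jumpDefect_congr hν₀' hν₁' hyz, jumpDefect_eq_zero_iff]
    exact hbc
  · rintro ⟨c, hc, hMc⟩
    refine ⟨z c, _, hz c, ?_, jumpDefect_eq_zero_iff.1 (by rw [hMz, hMc])⟩
    by_contra! hzero
    apply hc
    ext i
    fin_cases i
    · simpa [z, hY₁0, hY₂0] using hzero 0 (left_mem_Icc.2 zero_le_one)
    · simpa [hY₁'0, hY₂'0] using (hz c).deriv_zero_eq_zero_of_eqOn_zero hzero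
end
end

section
/- For every a ∈ (0,1) and every λ ∈ ℂ with λ ≠ 0, one has det [[cos(a√λ) − 1, sin(a√λ)/√λ], [cos(a√λ) − cos(√λ), sin(a√λ)/√λ − sin(√λ)/√λ]] = −(4/√λ)·sin(√λ(1−a)/2)·sin(√λ a/2)·sin(√λ/2), where √λ denotes a fixed choice of complex square root of λ (both sides are unchanged if √λ is replaced by −√λ). -/
open Complex

theorem Complex.cos_sub_one_mul_sin_sub_sub_sin_mul_cos_sub (x y : ℂ) :
    (cos x - 1) * (sin x - sin y) - sin x * (cos x - cos y) =
      -4 * sin ((y - x) / 2) * sin (x / 2) * sin (y / 2) := by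
  obtain ⟨u, rfl⟩ : ∃ u, x = 2 * u := ⟨x / 2, by ring⟩
  obtain ⟨v, rfl⟩ : ∃ v, y = 2 * v := ⟨y / 2, by ring⟩
  rw [show (2 * v - 2 * u) / 2 = v - u by ring, mul_div_cancel_left₀ u two_ne_zero,
    mul_div_cancel_left₀ v two_ne_zero, sin_two_mul, cos_two_mul, sin_two_mul, cos_two_mul,
    sin_sub]
  linear_combination (-4 * sin v * cos v) * sin_sq_add_cos_sq u +
    (4 * sin u * cos u) * sin_sq_add_cos_sq v

theorem stmt8_general (a : ℝ) (s : ℂ) :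
    (Complex.cos ((a : ℂ) * s) - 1) *
        (Complex.sin ((a : ℂ) * s) / s - Complex.sin s / s) -
      (Complex.sin ((a : ℂ) * s) / s) *
        (Complex.cos ((a : ℂ) * s) - Complex.cos s) =
    -(4 / s) * Complex.sin (s * (1 - (a : ℂ)) / 2) *
      Complex.sin (s * (a : ℂ) / 2) * Complex.sin (s / 2) := by
  have h := cos_sub_one_mul_sin_sub_sub_sin_mul_cos_sub (s * a) s
  rw [show s - s * a = s * (1 - a) by ring] at h
  rw [mul_comm (a : ℂ) s]
  linear_combination h / s

theorem stmt8 (a : ℝ) (ha : a ∈ Set.Ioo (0:ℝ) 1) (lam s : ℂ)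
    (hlam : lam ≠ 0) (hs : s ^ 2 = lam) :
    (Complex.cos ((a : ℂ) * s) - 1) *
        (Complex.sin ((a : ℂ) * s) / s - Complex.sin s / s) -
      (Complex.sin ((a : ℂ) * s) / s) *
        (Complex.cos ((a : ℂ) * s) - Complex.cos s) =
    -(4 / s) * Complex.sin (s * (1 - (a : ℂ)) / 2) *
      Complex.sin (s * (a : ℂ) / 2) * Complex.sin (s / 2) :=
  stmt8_general a s
end

section
/- Fix a ∈ (0,1). A number λ ∈ ℂ is an eigenvalue of the problem −y'' = λy, y(0) = y(a) = y(1), if and only if Δ_a(λ) = 0; equivalently, if and only if sin(√λ(1−a)/2)·sin(√λ a/2)·sin(√λ/2) = 0 for a (hence any) complex square root √λ of λ. -/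
/-!
Write `λ = s²`. For `s ≠ 0` every solution of `-y'' = s² y` on `[0,1]` is
`c cos (s x) + d sin (s x)` with `c = y 0`, `d = y' 0 / s`: the Wronskians of `y` against
`cos (s ·)` and `sin (s ·)` are constant. The conditions `y 0 = y a = y 1` are then a homogeneous
`2 × 2` linear system in `(c, d)`, whose determinant equals
`4 sin (s (1 - a) / 2) sin (s a / 2) sin (s / 2)` by the half-angle formulas.
For `λ = 0` the constants are eigenfunctions, and `Δ_a 0 = 0` by continuity of `Δ_a`, since
`sin (s / 2) / s` stays bounded as `s → 0`.
-/

open Set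

noncomputable section

/-- `y` is a (twice continuously differentiable) solution of `-y'' = lam y` on `[0,1]`. -/
def IsSolNeg (lam : ℂ) (y : ℝ → ℂ) : Prop :=
  ContDiffOn ℝ 2 y (Icc 0 1) ∧
    ∀ x ∈ Icc (0:ℝ) 1, -(iteratedDerivWithin 2 y (Icc (0:ℝ) 1) x) = lam * y x

/-- `lam` is an eigenvalue of the problem `-y'' = lam y`, `y(0) = y(a) = y(1)`. -/
def IsEigA (a : ℝ) (lam : ℂ) : Prop :=
  ∃ y : ℝ → ℂ, IsSolNeg lam y ∧ (∃ x ∈ Icc (0:ℝ) 1, y x ≠ 0) ∧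
    y 0 = y a ∧ y a = y 1

theorem exists_ne_zero_linear_eq_zero_iff {K : Type*} [Field K] (p q r t : K) :
    (∃ c d : K, (c ≠ 0 ∨ d ≠ 0) ∧ p * c + q * d = 0 ∧ r * c + t * d = 0) ↔
      p * t - q * r = 0 := by
  rw [← Matrix.det_fin_two_of, ← Matrix.exists_mulVec_eq_zero_iff]
  constructor
  · rintro ⟨c, d, hcd, h₁, h₂⟩
    refine ⟨![c, d], ?_, ?_⟩
    · rcases hcd with h | h
      · exact fun hv => h (congrFun hv 0)
      · exact fun hv => h (congrFun hv 1)
    · ext i; fin_cases i <;> simpa [Matrix.mulVec, dotProduct, Fin.sum_univ_two]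
  · rintro ⟨v, hv, hMv⟩
    refine ⟨v 0, v 1, ?_, ?_, ?_⟩
    · by_contra! h
      exact hv (funext fun i => by fin_cases i <;> simp [h.1, h.2])
    · simpa [Matrix.mulVec, dotProduct, Fin.sum_univ_two] using congrFun hMv 0
    · simpa [Matrix.mulVec, dotProduct, Fin.sum_univ_two] using congrFun hMv 1

theorem eqOn_Icc_of_hasDerivWithinAt_zero {E : Type*} [NormedAddCommGroup E] [NormedSpace ℝ E]
    {f : ℝ → E} {a b : ℝ} (hf : ∀ x ∈ Icc a b, HasDerivWithinAt f 0 (Icc a b) x) :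
    ∀ x ∈ Icc a b, f x = f a :=
  constant_of_derivWithin_zero (fun x hx => (hf x hx).differentiableWithinAt) fun x hx =>
    (hf x (Ico_subset_Icc_self hx)).derivWithin
      (uniqueDiffOn_Icc (hx.1.trans_lt hx.2) x (Ico_subset_Icc_self hx))

section
open Complex

theorem hasDerivAt_const_mul_ofReal (s : ℂ) (x : ℝ) :
    HasDerivAt (fun x : ℝ => s * x) s x := by
  simpa using ((hasDerivAt_id x).ofReal_comp).const_mul s

theorem hasDerivAt_cos_mul_ofReal (s : ℂ) (x : ℝ) :
    HasDerivAt (fun x : ℝ => cos (s * x)) (-sin (s * x) * s) x :=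
  (hasDerivAt_cos _).comp x (hasDerivAt_const_mul_ofReal s x)

theorem hasDerivAt_sin_mul_ofReal (s : ℂ) (x : ℝ) :
    HasDerivAt (fun x : ℝ => sin (s * x)) (cos (s * x) * s) x :=
  (hasDerivAt_sin _).comp x (hasDerivAt_const_mul_ofReal s x)

def trigSol (s c d : ℂ) (x : ℝ) : ℂ := c * cos (s * x) + d * sin (s * x)

theorem hasDerivAt_trigSol (s c d : ℂ) (x : ℝ) :
    HasDerivAt (trigSol s c d) (trigSol s (s * d) (-(s * c)) x) x := by
  refine (((hasDerivAt_cos_mul_ofReal s x).const_mul c).add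
    ((hasDerivAt_sin_mul_ofReal s x).const_mul d)).congr_deriv ?_
  simp only [trigSol]
  ring

theorem contDiff_trigSol (s c d : ℂ) : ContDiff ℝ 2 (trigSol s c d) := by
  have hlin : ContDiff ℝ 2 fun x : ℝ => s * x := contDiff_const.mul ofRealCLM.contDiff
  exact (contDiff_const.mul ((contDiff_cos.restrict_scalars ℝ).comp hlin)).add
    (contDiff_const.mul ((contDiff_sin.restrict_scalars ℝ).comp hlin))

theorem isSolNeg_trigSol (s c d : ℂ) : IsSolNeg (s ^ 2) (trigSol s c d) := by
  have hderiv (c d : ℂ) : deriv (trigSol s c d) = trigSol s (s * d) (-(s * c)) :=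
    funext fun x => (hasDerivAt_trigSol s c d x).deriv
  refine ⟨(contDiff_trigSol s c d).contDiffOn, fun x hx => ?_⟩
  rw [iteratedDerivWithin_eq_iteratedDeriv (uniqueDiffOn_Icc zero_lt_one)
    (contDiff_trigSol s c d).contDiffAt hx, iteratedDeriv_succ, iteratedDeriv_one, hderiv, hderiv]
  simp only [trigSol]
  ring

theorem exists_trigSol_ne_zero {s c d : ℂ} (hs : s ≠ 0) (hcd : c ≠ 0 ∨ d ≠ 0) :
    ∃ x ∈ Icc (0:ℝ) 1, trigSol s c d x ≠ 0 := by
  by_contra! h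
  have h0 : (0:ℝ) ∈ Icc (0:ℝ) 1 := left_mem_Icc.2 zero_le_one
  have hc : c = 0 := by simpa [trigSol] using h 0 h0
  have hderiv : HasDerivWithinAt (trigSol s c d) 0 (Icc 0 1) 0 :=
    (hasDerivWithinAt_const 0 _ 0).congr h (h 0 h0)
  have hd : s * d = 0 := by
    simpa [trigSol] using (uniqueDiffOn_Icc zero_lt_one 0 h0).eq_deriv _
      (hasDerivAt_trigSol s c d 0).hasDerivWithinAt hderiv
  exact hcd.elim (· hc) fun hd' => mul_ne_zero hs hd' hd

namespace IsSolNeg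

variable {lam : ℂ} {y : ℝ → ℂ}

theorem hasDerivWithinAt (h : IsSolNeg lam y) {x : ℝ} (hx : x ∈ Icc (0:ℝ) 1) :
    HasDerivWithinAt y (derivWithin y (Icc 0 1) x) (Icc 0 1) x :=
  (h.1.differentiableOn two_ne_zero x hx).hasDerivWithinAt

theorem hasDerivWithinAt_derivWithin (h : IsSolNeg lam y) {x : ℝ} (hx : x ∈ Icc (0:ℝ) 1) :
    HasDerivWithinAt (derivWithin y (Icc 0 1)) (-(lam * y x)) (Icc 0 1) x := by
  have hy' : ContDiffOn ℝ 1 (derivWithin y (Icc 0 1)) (Icc 0 1) :=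
    h.1.derivWithin (uniqueDiffOn_Icc zero_lt_one) le_rfl
  have hy'' : derivWithin (derivWithin y (Icc 0 1)) (Icc 0 1) x = -(lam * y x) := by
    rw [← h.2 x hx, neg_neg, iteratedDerivWithin_succ', iteratedDerivWithin_one]
  exact hy'' ▸ (hy'.differentiableOn one_ne_zero x hx).hasDerivWithinAt

theorem eqOn_trigSol {s : ℂ} (h : IsSolNeg (s ^ 2) y) (hs : s ≠ 0) :
    EqOn y (trigSol s (y 0) (derivWithin y (Icc 0 1) 0 / s)) (Icc 0 1) := by
  set g := derivWithin y (Icc 0 1)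
  have hcos := hasDerivAt_cos_mul_ofReal s
  have hsin := hasDerivAt_sin_mul_ofReal s
  have hF := eqOn_Icc_of_hasDerivWithinAt_zero
    (f := fun x => y x * cos (s * x) - g x / s * sin (s * x)) fun x hx => by
      refine (((h.hasDerivWithinAt hx).mul (hcos x).hasDerivWithinAt).sub
        (((h.hasDerivWithinAt_derivWithin hx).div_const s).mul
          (hsin x).hasDerivWithinAt)).congr_deriv ?_
      field_simp
      ring
  have hG := eqOn_Icc_of_hasDerivWithinAt_zero
    (f := fun x => y x * sin (s * x) + g x / s * cos (s * x)) fun x hx => by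
      refine (((h.hasDerivWithinAt hx).mul (hsin x).hasDerivWithinAt).add
        (((h.hasDerivWithinAt_derivWithin hx).div_const s).mul
          (hcos x).hasDerivWithinAt)).congr_deriv ?_
      field_simp
      ring
  intro x hx
  have hFx : y x * cos (s * x) - g x / s * sin (s * x) = y 0 := by simpa using hF x hx
  have hGx : y x * sin (s * x) + g x / s * cos (s * x) = g 0 / s := by simpa using hG x hx
  rw [trigSol, ← hFx, ← hGx]
  linear_combination (y x) * (sin_sq_add_cos_sq (s * x)).symm

end IsSolNeg

theorem trigSol_eq_iff (s c d : ℂ) (x : ℝ) :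
    trigSol s c d x = c ↔ (cos (s * x) - 1) * c + sin (s * x) * d = 0 := by
  rw [trigSol, ← sub_eq_zero]
  ring_nf

theorem isEigA_sq_iff {a : ℝ} (ha : a ∈ Icc (0:ℝ) 1) {s : ℂ} (hs : s ≠ 0) :
    IsEigA a (s ^ 2) ↔
      ∃ c d : ℂ, (c ≠ 0 ∨ d ≠ 0) ∧ trigSol s c d a = c ∧ trigSol s c d 1 = c := by
  constructor
  · rintro ⟨y, hy, ⟨x, hx, hyx⟩, hy0, hy1⟩
    have hrep := hy.eqOn_trigSol hs
    refine ⟨y 0, derivWithin y (Icc 0 1) 0 / s, ?_, ?_, ?_⟩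
    · by_contra! hcd
      exact hyx (by simp [hrep hx, hcd.1, hcd.2, trigSol])
    · rw [← hrep ha, hy0]
    · rw [← hrep (right_mem_Icc.2 zero_le_one), ← hy1, hy0]
  · rintro ⟨c, d, hcd, hca, hc1⟩
    refine ⟨trigSol s c d, isSolNeg_trigSol s c d, exists_trigSol_ne_zero hs hcd, ?_, ?_⟩
    · rw [hca]
      simp [trigSol]
    · rw [hca, hc1]

def sinProd (α s : ℂ) : ℂ := sin (s * (1 - α) / 2) * sin (s * α / 2) * sin (s / 2)

theorem sinProd_neg (α s : ℂ) : sinProd α (-s) = -sinProd α s := by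
  simp only [sinProd, neg_mul, neg_div, sin_neg]
  ring

theorem sinProd_eq_zero_iff_of_sq_eq {α s t : ℂ} (h : s ^ 2 = t ^ 2) :
    sinProd α s = 0 ↔ sinProd α t = 0 := by
  rcases sq_eq_sq_iff_eq_or_eq_neg.1 h with rfl | rfl
  · rfl
  · rw [sinProd_neg, neg_eq_zero]

theorem four_mul_sinProd (α s : ℂ) :
    4 * sinProd α s = (cos (s * α) - 1) * sin s - sin (s * α) * (cos s - 1) := by
  obtain ⟨u, rfl⟩ : ∃ u, s = 2 * u := ⟨s / 2, by ring⟩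
  obtain ⟨v, hv⟩ : ∃ v, 2 * u * α = 2 * v := ⟨u * α, by ring⟩
  have hw : 2 * u * (1 - α) / 2 = u - v := by linear_combination -hv / 2
  rw [sinProd, hw, show 2 * u * α / 2 = v by linear_combination hv / 2,
    show 2 * u / 2 = u by ring, hv, cos_two_mul, sin_two_mul, cos_two_mul, sin_two_mul, sin_sub]
  linear_combination 4 * sin v * cos v * sin_sq_add_cos_sq u
    - 4 * sin u * cos u * sin_sq_add_cos_sq v

theorem isEigA_sq_iff_sinProd_eq_zero {a : ℝ} (ha : a ∈ Icc (0:ℝ) 1) {s : ℂ}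
    (hs : s ≠ 0) :
    IsEigA a (s ^ 2) ↔ sinProd a s = 0 := by
  simp only [isEigA_sq_iff ha hs, trigSol_eq_iff, ofReal_one, mul_one,
    exists_ne_zero_linear_eq_zero_iff, ← four_mul_sinProd]
  exact mul_eq_zero_iff_left (by norm_num)

theorem isEigA_zero (a : ℝ) : IsEigA a 0 :=
  ⟨trigSol 0 1 0, by simpa using isSolNeg_trigSol 0 1 0,
    ⟨0, left_mem_Icc.2 zero_le_one, by simp [trigSol]⟩, by simp [trigSol], by simp [trigSol]⟩

theorem apply_zero_eq_zero_of_sq {Δ : ℂ → ℂ} (hΔ : Continuous Δ) (α : ℂ)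
    (hval : ∀ s ≠ 0, Δ (s ^ 2) = -(4 / s) * sinProd α s) : Δ 0 = 0 := by
  -- `dslope f 0` is the continuous extension of `sin (t / 2) / t` across `t = 0`.
  set f : ℂ → ℂ := fun t => sin (t / 2)
  have hf : Continuous (dslope f 0) := continuous_iff_continuousAt.2 fun t => by
    rcases eq_or_ne t 0 with rfl | ht
    · exact continuousAt_dslope_same.2 (by fun_prop)
    · exact (continuousAt_dslope_of_ne ht).2 (by fun_prop)
  have heq : (fun t => Δ (t ^ 2)) =
      fun t => -4 * sin (t * (1 - α) / 2) * sin (t * α / 2) * dslope f 0 t :=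
    Continuous.ext_on (dense_compl_singleton 0) (by fun_prop) (by fun_prop)
      fun t (ht : t ≠ 0) => by
      have hft : sin (t / 2) = t * dslope f 0 t := by
        simpa [f] using (sub_smul_dslope_of_zero (f := f) (a := 0) (by simp [f]) t).symm
      rw [hval t ht, sinProd, hft]
      field_simp
  simpa using congrFun heq 0

end

theorem stmt9 (a : ℝ) (ha : a ∈ Ioo (0:ℝ) 1)
    (Δa : ℂ → ℂ) (hΔent : Differentiable ℂ Δa)
    (hΔval : ∀ lam : ℂ, lam ≠ 0 → ∀ s : ℂ, s ^ 2 = lam →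
      Δa lam = -(4 / s) * Complex.sin (s * (1 - (a : ℂ)) / 2) *
        Complex.sin (s * (a : ℂ) / 2) * Complex.sin (s / 2))
    (lam : ℂ) :
    (IsEigA a lam ↔ Δa lam = 0) ∧
    (IsEigA a lam ↔ ∀ s : ℂ, s ^ 2 = lam →
      Complex.sin (s * (1 - (a : ℂ)) / 2) * Complex.sin (s * (a : ℂ) / 2) *
        Complex.sin (s / 2) = 0) := by
  have hΔ (s : ℂ) (hs : s ≠ 0) : Δa (s ^ 2) = -(4 / s) * sinProd a s := by
    rw [hΔval _ (pow_ne_zero 2 hs) s rfl, sinProd]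
    ring
  change _ ∧ (_ ↔ ∀ s : ℂ, s ^ 2 = lam → sinProd a s = 0)
  obtain ⟨s, rfl⟩ := IsAlgClosed.exists_pow_nat_eq lam two_pos
  rcases eq_or_ne s 0 with rfl | hs
  · rw [zero_pow two_ne_zero]
    refine ⟨iff_of_true (isEigA_zero a) (apply_zero_eq_zero_of_sq hΔent.continuous a hΔ),
      iff_of_true (isEigA_zero a) fun t ht => ?_⟩
    simp [sq_eq_zero_iff.1 ht, sinProd]
  have heig := isEigA_sq_iff_sinProd_eq_zero (Ioo_subset_Icc_self ha) hs
  refine ⟨by simp [heig, hΔ s hs, hs], heig.trans ⟨fun h t ht => ?_, fun h => h s rfl⟩⟩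
  exact (sinProd_eq_zero_iff_of_sq_eq ht).2 h
end
end

section
/- Fix a ∈ (0,1) and let λ̂ ∈ ℂ with λ̂ ≠ 0. Then Δ_a(λ̂) = 0 and Δ_a'(λ̂) = 0 hold simultaneously if and only if there exist positive integers m, n, l such that λ̂ = (2mπ)² = (2nπ/a)² = (2lπ/(1−a))². -/
/-!
Substituting `λ = s²` removes the square root: `s Δ_a(s²) = -4 sin(s(1-a)/2) sin(sa/2) sin(s/2)`
is a product of three sines, and for `s ≠ 0` the point `s²` is a double zero of `Δ_a` exactly when
`s` is a double zero of this product. Each factor has only simple zeros, so this happens iff two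
factors vanish, and since `s/2 = s(1-a)/2 + sa/2` two of them vanish only if all three do.
-/

open Set

noncomputable section

open Complex Filter Topology

theorem eq_zero_and_deriv_eq_zero_iff_of_eventually_mul_comp_sq {f p : ℂ → ℂ} {s c : ℂ}
    (hs : s ≠ 0) (hc : c ≠ 0) (hf : DifferentiableAt ℂ f (s ^ 2))
    (hfp : (fun z => z * f (z ^ 2)) =ᶠ[𝓝 s] fun z => c * p z) :
    (f (s ^ 2) = 0 ∧ deriv f (s ^ 2) = 0) ↔ (p s = 0 ∧ deriv p s = 0) := by
  have hderiv : HasDerivAt (fun z => z * f (z ^ 2))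
      (1 * f (s ^ 2) + s * (deriv f (s ^ 2) * (2 * s))) s := by
    refine (hasDerivAt_id s).mul (hf.hasDerivAt.comp s ?_)
    simpa using hasDerivAt_pow 2 s
  have hval : s * f (s ^ 2) = c * p s := hfp.self_of_nhds
  have hder : 1 * f (s ^ 2) + s * (deriv f (s ^ 2) * (2 * s)) = c * deriv p s := by
    rw [← hderiv.deriv, hfp.deriv_eq, deriv_const_mul_field']
  constructor
  · rintro ⟨h0, h1⟩
    rw [h0, mul_zero, eq_comm, mul_eq_zero] at hval
    rw [h0, h1] at hder
    simp_all
  · rintro ⟨h0, h1⟩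
    rw [h0, mul_zero, mul_eq_zero] at hval
    have h0' : f (s ^ 2) = 0 := hval.resolve_left hs
    rw [h0', h1] at hder
    simp_all

theorem mul_mul_eq_zero_and_deriv_eq_zero_iff {𝕜 : Type*} [NontriviallyNormedField 𝕜]
    {u v w : 𝕜 → 𝕜} {u' v' w' x : 𝕜} (hu : HasDerivAt u u' x) (hv : HasDerivAt v v' x)
    (hw : HasDerivAt w w' x) (hu' : u x = 0 → u' ≠ 0) (hv' : v x = 0 → v' ≠ 0)
    (hw' : w x = 0 → w' ≠ 0) :
    (u x * v x * w x = 0 ∧ deriv (fun y => u y * v y * w y) x = 0) ↔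
      (u x = 0 ∧ v x = 0 ∨ u x = 0 ∧ w x = 0 ∨ v x = 0 ∧ w x = 0) := by
  rw [((hu.fun_mul hv).fun_mul hw).deriv]
  constructor
  · rintro ⟨h0, h1⟩
    rcases mul_eq_zero.1 h0 with h | hw0
    · rcases mul_eq_zero.1 h with hu0 | hv0
      · have : u' * (v x * w x) = 0 := by rw [hu0] at h1; linear_combination h1
        rcases mul_eq_zero.1 ((mul_eq_zero.1 this).resolve_left (hu' hu0)) with h | h
        exacts [Or.inl ⟨hu0, h⟩, Or.inr (Or.inl ⟨hu0, h⟩)]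
      · have : v' * (u x * w x) = 0 := by rw [hv0] at h1; linear_combination h1
        rcases mul_eq_zero.1 ((mul_eq_zero.1 this).resolve_left (hv' hv0)) with h | h
        exacts [Or.inl ⟨h, hv0⟩, Or.inr (Or.inr ⟨hv0, h⟩)]
    · have : w' * (u x * v x) = 0 := by rw [hw0] at h1; linear_combination h1
      rcases mul_eq_zero.1 ((mul_eq_zero.1 this).resolve_left (hw' hw0)) with h | h
      exacts [Or.inr (Or.inl ⟨h, hw0⟩), Or.inr (Or.inr ⟨h, hw0⟩)]
  · rintro (⟨h1, h2⟩ | ⟨h1, h2⟩ | ⟨h1, h2⟩) <;> simp [h1, h2]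

theorem Complex.hasDerivAt_sin_mul_div_two (c z : ℂ) :
    HasDerivAt (fun z => sin (z * c / 2)) (cos (z * c / 2) * (c / 2)) z := by
  refine (hasDerivAt_sin _).comp z ?_
  simpa only [mul_div_assoc] using hasDerivAt_mul_const (c / 2)

theorem Complex.cos_ne_zero_of_sin_eq_zero {z : ℂ} (h : sin z = 0) : cos z ≠ 0 := by
  intro hc
  simpa [h, hc] using sin_sq_add_cos_sq z

theorem Complex.cos_mul_div_two_mul_ne_zero {c z : ℂ} (hc : c ≠ 0) (h : sin (z * c / 2) = 0) :
    cos (z * c / 2) * (c / 2) ≠ 0 :=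
  mul_ne_zero (cos_ne_zero_of_sin_eq_zero h) (div_ne_zero hc two_ne_zero)

theorem Complex.sin_eq_zero_and_sin_eq_zero_iff_of_add {A B C : ℂ} (hC : C = A + B) :
    (sin A = 0 ∧ sin B = 0 ∨ sin A = 0 ∧ sin C = 0 ∨ sin B = 0 ∧ sin C = 0) ↔
      (sin A = 0 ∧ sin B = 0 ∧ sin C = 0) := by
  have hA : A = C - B := by rw [hC]; ring
  have hB : B = C - A := by rw [hC]; ring
  constructor
  · rintro (⟨h1, h2⟩ | ⟨h1, h2⟩ | ⟨h1, h2⟩)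
    · simp [h1, h2, hC, sin_add]
    · simp [h1, h2, hB, sin_sub]
    · simp [h1, h2, hA, sin_sub]
  · rintro ⟨h1, h2, -⟩
    exact Or.inl ⟨h1, h2⟩

theorem Complex.sin_mul_div_two_eq_zero_iff {s : ℂ} (hs : s ≠ 0) {c : ℝ} (hc : 0 < c) :
    sin (s * c / 2) = 0 ↔ ∃ n : ℕ, 0 < n ∧ s ^ 2 = ((2 * n * Real.pi / c : ℝ) : ℂ) ^ 2 := by
  have hc' : (c : ℂ) ≠ 0 := by exact_mod_cast hc.ne'
  rw [sin_eq_zero_iff]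
  constructor
  · rintro ⟨k, hk⟩
    have hs' : s = 2 * k * Real.pi / c := by field_simp; linear_combination 2 * hk
    have hk0 : k ≠ 0 := by rintro rfl; simp [hs'] at hs
    refine ⟨k.natAbs, Int.natAbs_pos.2 hk0, ?_⟩
    have hsq : (2 * k.natAbs * Real.pi / c) ^ 2 = (2 * k * Real.pi / c) ^ 2 := by
      rw [Nat.cast_natAbs, Int.cast_abs, div_pow, div_pow, mul_pow, mul_pow, mul_pow, mul_pow,
        sq_abs]
    rw [hs']
    exact_mod_cast hsq.symm
  · rintro ⟨n, -, hn⟩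
    rcases sq_eq_sq_iff_eq_or_eq_neg.1 hn with h | h
    · exact ⟨n, by rw [h]; push_cast; field_simp⟩
    · exact ⟨-n, by rw [h]; push_cast; field_simp⟩

theorem stmt10 (a : ℝ) (ha : a ∈ Ioo (0:ℝ) 1)
    (Δa : ℂ → ℂ) (hΔent : Differentiable ℂ Δa)
    (hΔval : ∀ lam : ℂ, lam ≠ 0 → ∀ s : ℂ, s ^ 2 = lam →
      Δa lam = -(4 / s) * Complex.sin (s * (1 - (a : ℂ)) / 2) *
        Complex.sin (s * (a : ℂ) / 2) * Complex.sin (s / 2))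
    (lamh : ℂ) (hlamh : lamh ≠ 0) :
    (Δa lamh = 0 ∧ deriv Δa lamh = 0) ↔
      ∃ m n l : ℕ, 0 < m ∧ 0 < n ∧ 0 < l ∧
        lamh = ((2 * (m : ℝ) * Real.pi : ℝ) : ℂ) ^ 2 ∧
        lamh = ((2 * (n : ℝ) * Real.pi / a : ℝ) : ℂ) ^ 2 ∧
        lamh = ((2 * (l : ℝ) * Real.pi / (1 - a) : ℝ) : ℂ) ^ 2 := by
  obtain ⟨ha0, ha1⟩ := ha
  obtain ⟨s, rfl⟩ : ∃ s, s ^ 2 = lamh := IsAlgClosed.exists_pow_nat_eq lamh two_pos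
  have hs : s ≠ 0 := by rintro rfl; simp at hlamh
  have hΔ : (fun z => z * Δa (z ^ 2)) =ᶠ[𝓝 s] fun z => -4 * (sin (z * ((1 - a : ℝ) : ℂ) / 2) *
      sin (z * (a : ℂ) / 2) * sin (z * ((1 : ℝ) : ℂ) / 2)) := by
    filter_upwards [eventually_ne_nhds hs] with z hz
    rw [hΔval _ (pow_ne_zero 2 hz) z rfl]
    push_cast
    field_simp
  have hne : ∀ c : ℝ, 0 < c → (c : ℂ) ≠ 0 := fun c hc => by exact_mod_cast hc.ne'
  rw [eq_zero_and_deriv_eq_zero_iff_of_eventually_mul_comp_sq hs (by norm_num) (hΔent _) hΔ,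
    mul_mul_eq_zero_and_deriv_eq_zero_iff (hasDerivAt_sin_mul_div_two _ s)
      (hasDerivAt_sin_mul_div_two _ s) (hasDerivAt_sin_mul_div_two _ s)
      (cos_mul_div_two_mul_ne_zero (hne _ (sub_pos.2 ha1)))
      (cos_mul_div_two_mul_ne_zero (hne _ ha0))
      (cos_mul_div_two_mul_ne_zero (hne _ one_pos)),
    sin_eq_zero_and_sin_eq_zero_iff_of_add (by push_cast; ring),
    sin_mul_div_two_eq_zero_iff hs (sub_pos.2 ha1), sin_mul_div_two_eq_zero_iff hs ha0,
    sin_mul_div_two_eq_zero_iff hs one_pos]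
  simp only [div_one]
  constructor
  · rintro ⟨⟨l, hl, hl'⟩, ⟨n, hn, hn'⟩, ⟨m, hm, hm'⟩⟩
    exact ⟨m, n, l, hm, hn, hl, hm', hn', hl'⟩
  · rintro ⟨m, n, l, hm, hn, hl, hm', hn', hl'⟩
    exact ⟨⟨l, hl, hl'⟩, ⟨n, hn, hn'⟩, ⟨m, hm, hm'⟩⟩
end
end

section
/- Fix a ∈ (0,1). If λ̂ ∈ ℂ with λ̂ ≠ 0 satisfies Δ_a(λ̂) = 0 and Δ_a'(λ̂) = 0, then Δ_a''(λ̂) = 0 and Δ_a'''(λ̂) = 3(a² − a)/(8λ̂²), which is nonzero. Moreover, Δ_a(0) = 0 and Δ_a'(0) = a(a − 1)/2 ≠ 0. -/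
/-!
Substituting `λ = s²` removes the square root: `s · Δ_a(s²) = sin s - sin (a s) - sin ((1 - a) s)`
by a product-to-sum identity, and differentiating `n + 1` times gives
`(n + 1) g⁽ⁿ⁾(s) + s g⁽ⁿ⁺¹⁾(s)` with `g(s) = Δ_a(s²)`. At a double root `λ̂ = ŝ²` the conditions
`g(ŝ) = g'(ŝ) = 0` say that `sin (aŝ/2) sin ((1 - a)ŝ/2) sin (ŝ/2) = 0` and
`sin² (ŝ/2) = a sin² (aŝ/2) + (1 - a) sin² ((1 - a)ŝ/2)`, which together force all three half-angle
sines to vanish. Then the sines of `aŝ, (1 - a)ŝ, ŝ` vanish and their cosines are `1`, so the second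
and third derivatives of the right-hand side at `ŝ` are `0` and `-1 + a³ + (1 - a)³ = 3(a² - a)`;
the chain rule through `s ↦ s²` turns these into `Δ_a''(λ̂) = 0` and `8 λ̂² Δ_a'''(λ̂) = 3(a² - a)`.
At `s = 0` the same identities give `Δ_a(0) = 0` and `6 Δ_a'(0) = 3(a² - a)`.
-/

section IteratedDeriv

variable {𝕜 : Type*} [NontriviallyNormedField 𝕜] {f : 𝕜 → 𝕜}

lemma iteratedDeriv_succ_fun_id_mul {n : ℕ} {x : 𝕜} (hf : ContDiffAt 𝕜 (n + 1) f x) :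
    iteratedDeriv (n + 1) (fun y => y * f y) x
      = (n + 1) * iteratedDeriv n f x + x * iteratedDeriv (n + 1) f x := by
  rw [iteratedDeriv_fun_mul contDiffAt_id (by exact_mod_cast hf), Finset.sum_range_succ',
    Finset.sum_range_succ']
  simp [iteratedDeriv_fun_id]

lemma hasDerivAt_comp_sq {s : 𝕜} (hf : DifferentiableAt 𝕜 f (s ^ 2)) :
    HasDerivAt (fun z => f (z ^ 2)) (2 * s * deriv f (s ^ 2)) s := by
  have h : HasDerivAt (fun z => f (z ^ 2)) _ s := hf.hasDerivAt.comp s (hasDerivAt_pow 2 s)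
  convert h using 1
  push_cast; ring

lemma deriv_comp_sq (hf : Differentiable 𝕜 f) :
    deriv (fun z => f (z ^ 2)) = fun s => 2 * s * deriv f (s ^ 2) :=
  funext fun _ => (hasDerivAt_comp_sq (hf _)).deriv

lemma iteratedDeriv_two_comp_sq (hf : ContDiff 𝕜 2 f) :
    iteratedDeriv 2 (fun z => f (z ^ 2))
      = fun s => 2 * deriv f (s ^ 2) + 4 * s ^ 2 * iteratedDeriv 2 f (s ^ 2) := by
  have hf' : Differentiable 𝕜 (deriv f) := by
    simpa using hf.differentiable_iteratedDeriv 1 (by norm_num)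
  rw [iteratedDeriv_succ, iteratedDeriv_one, deriv_comp_sq (hf.differentiable (by norm_num))]
  funext s
  have h := ((hasDerivAt_id' s).const_mul 2).fun_mul (hasDerivAt_comp_sq (hf' (s ^ 2)))
  rw [h.deriv, iteratedDeriv_succ, iteratedDeriv_one]
  ring

lemma iteratedDeriv_three_comp_sq (hf : ContDiff 𝕜 3 f) :
    iteratedDeriv 3 (fun z => f (z ^ 2))
      = fun s => 12 * s * iteratedDeriv 2 f (s ^ 2) + 8 * s ^ 3 * iteratedDeriv 3 f (s ^ 2) := by
  have h1 : Differentiable 𝕜 (deriv f) := by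
    simpa using hf.differentiable_iteratedDeriv 1 (by norm_num)
  have h2 : Differentiable 𝕜 (iteratedDeriv 2 f) :=
    hf.differentiable_iteratedDeriv 2 (by norm_num)
  rw [iteratedDeriv_succ, iteratedDeriv_two_comp_sq (hf.of_le (by norm_num))]
  funext s
  have h := ((hasDerivAt_comp_sq (h1 (s ^ 2))).const_mul 2).fun_add
    (((hasDerivAt_pow 2 s).const_mul 4).fun_mul (hasDerivAt_comp_sq (h2 (s ^ 2))))
  rw [h.deriv, ← iteratedDeriv_succ, ← iteratedDeriv_one (f := f), ← iteratedDeriv_succ]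
  push_cast
  ring

end IteratedDeriv

namespace Complex

lemma sin_add_sq_of_sin_eq_zero {u : ℂ} (hu : sin u = 0) (v : ℂ) :
    sin (u + v) ^ 2 = sin v ^ 2 := by
  rw [sin_add, hu, zero_mul, zero_add, mul_pow, cos_sq', hu]
  ring

lemma sin_eq_zero_and_cos_eq_one_of_sin_half_eq_zero {z : ℂ} (h : sin (z / 2) = 0) :
    sin z = 0 ∧ cos z = 1 := by
  rw [show z = 2 * (z / 2) by ring, sin_two_mul, cos_two_mul, cos_sq', h]
  norm_num

lemma sin_two_mul_add_sub_sin_two_mul_sub_sin_two_mul (x y : ℂ) :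
    sin (2 * (x + y)) - sin (2 * x) - sin (2 * y) = -4 * sin x * sin y * sin (x + y) := by
  rw [sin_two_mul, sin_two_mul, sin_two_mul, sin_add, cos_add]
  linear_combination (2 * sin x * cos x) * sin_sq_add_cos_sq y
    + (2 * sin y * cos y) * sin_sq_add_cos_sq x

lemma cos_two_mul_add_sub_mul_cos_two_mul_sub_mul_cos_two_mul (a x y : ℂ) :
    cos (2 * (x + y)) - a * cos (2 * x) - (1 - a) * cos (2 * y)
      = 2 * (a * sin x ^ 2 + (1 - a) * sin y ^ 2 - sin (x + y) ^ 2) := by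
  rw [cos_two_mul, cos_two_mul, cos_two_mul, cos_sq', cos_sq', cos_sq']
  ring

-- If one of `sin x`, `sin y`, `sin (x + y)` vanishes, the squares of the other two agree.
lemma sin_eq_zero_of_sin_mul_sin_mul_sin_add_eq_zero {a x y : ℂ} (ha : a ≠ 0) (hb : 1 - a ≠ 0)
    (hprod : sin x * sin y * sin (x + y) = 0)
    (hsq : sin (x + y) ^ 2 = a * sin x ^ 2 + (1 - a) * sin y ^ 2) :
    sin x = 0 ∧ sin y = 0 := by
  rcases mul_eq_zero.1 hprod with hxy | hsum
  · rcases mul_eq_zero.1 hxy with hx | hy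
    · rw [sin_add_sq_of_sin_eq_zero hx, hx] at hsq
      have : a * sin y ^ 2 = 0 := by linear_combination hsq
      exact ⟨hx, pow_eq_zero_iff two_ne_zero |>.1 ((mul_eq_zero.1 this).resolve_left ha)⟩
    · rw [add_comm, sin_add_sq_of_sin_eq_zero hy, hy] at hsq
      have : (1 - a) * sin x ^ 2 = 0 := by linear_combination hsq
      exact ⟨pow_eq_zero_iff two_ne_zero |>.1 ((mul_eq_zero.1 this).resolve_left hb), hy⟩
  · have hyx : sin y ^ 2 = sin x ^ 2 := by
      simpa using sin_add_sq_of_sin_eq_zero hsum (-x)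
    rw [hsum, hyx] at hsq
    have hx : sin x = 0 := pow_eq_zero_iff two_ne_zero |>.1 (by linear_combination -hsq)
    exact ⟨hx, pow_eq_zero_iff two_ne_zero |>.1 (by rw [hyx, hx]; ring)⟩

lemma iteratedDeriv_one_sin : iteratedDeriv 1 sin = cos := by
  rw [iteratedDeriv_one, deriv_sin]

lemma iteratedDeriv_two_sin : iteratedDeriv 2 sin = -sin := by
  rw [iteratedDeriv_succ, iteratedDeriv_one_sin, deriv_cos']
  rfl

lemma iteratedDeriv_three_sin : iteratedDeriv 3 sin = -cos := by
  rw [iteratedDeriv_succ, iteratedDeriv_two_sin]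
  funext s
  simp

end Complex

open Complex Set

-- `s * Δ_a (s ^ 2) = sinDiff a s`, by `sinDiff_eq_mul_sin_half`.
noncomputable def sinDiff (a s : ℂ) : ℂ := sin s - sin (a * s) - sin ((1 - a) * s)

lemma iteratedDeriv_sinDiff (n : ℕ) (a s : ℂ) :
    iteratedDeriv n (sinDiff a) s = iteratedDeriv n sin s
      - a ^ n * iteratedDeriv n sin (a * s) - (1 - a) ^ n * iteratedDeriv n sin ((1 - a) * s) := by
  unfold sinDiff
  rw [iteratedDeriv_fun_sub (by fun_prop) (by fun_prop),
    iteratedDeriv_fun_sub (by fun_prop) (by fun_prop), iteratedDeriv_comp_const_mul contDiff_sin,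
    iteratedDeriv_comp_const_mul contDiff_sin]

lemma sinDiff_eq_mul_sin_half (a s : ℂ) :
    sinDiff a s = -4 * sin (a * s / 2) * sin ((1 - a) * s / 2) * sin (s / 2) := by
  have h := sin_two_mul_add_sub_sin_two_mul_sub_sin_two_mul (a * s / 2) ((1 - a) * s / 2)
  rw [show a * s / 2 + (1 - a) * s / 2 = s / 2 by ring] at h
  rw [sinDiff, ← h]
  ring_nf

lemma deriv_sinDiff (a s : ℂ) : deriv (sinDiff a) s
    = 2 * (a * sin (a * s / 2) ^ 2 + (1 - a) * sin ((1 - a) * s / 2) ^ 2 - sin (s / 2) ^ 2) := by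
  have h := cos_two_mul_add_sub_mul_cos_two_mul_sub_mul_cos_two_mul a (a * s / 2) ((1 - a) * s / 2)
  rw [show a * s / 2 + (1 - a) * s / 2 = s / 2 by ring] at h
  rw [← iteratedDeriv_one, iteratedDeriv_sinDiff, iteratedDeriv_one_sin, ← h]
  ring_nf

lemma sin_half_eq_zero_of_sinDiff_eq_zero {a s : ℂ} (ha : a ≠ 0) (hb : 1 - a ≠ 0)
    (h0 : sinDiff a s = 0) (h1 : deriv (sinDiff a) s = 0) :
    sin (a * s / 2) = 0 ∧ sin ((1 - a) * s / 2) = 0 ∧ sin (s / 2) = 0 := by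
  have hsum : a * s / 2 + (1 - a) * s / 2 = s / 2 := by ring
  have hprod :
      sin (a * s / 2) * sin ((1 - a) * s / 2) * sin (a * s / 2 + (1 - a) * s / 2) = 0 := by
    rw [hsum]
    rw [sinDiff_eq_mul_sin_half] at h0
    linear_combination -h0 / 4
  have hsq : sin (a * s / 2 + (1 - a) * s / 2) ^ 2
      = a * sin (a * s / 2) ^ 2 + (1 - a) * sin ((1 - a) * s / 2) ^ 2 := by
    rw [hsum]
    rw [deriv_sinDiff] at h1
    linear_combination -h1 / 2
  obtain ⟨hx, hy⟩ := sin_eq_zero_of_sin_mul_sin_mul_sin_add_eq_zero ha hb hprod hsq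
  refine ⟨hx, hy, ?_⟩
  rw [← hsum, sin_add, hx, hy]
  ring

lemma iteratedDeriv_sinDiff_of_sin_half_eq_zero {a s : ℂ} (hx : sin (a * s / 2) = 0)
    (hy : sin ((1 - a) * s / 2) = 0) (hs : sin (s / 2) = 0) :
    iteratedDeriv 2 (sinDiff a) s = 0 ∧ iteratedDeriv 3 (sinDiff a) s = 3 * (a ^ 2 - a) := by
  obtain ⟨hsx, hcx⟩ := sin_eq_zero_and_cos_eq_one_of_sin_half_eq_zero hx
  obtain ⟨hsy, hcy⟩ := sin_eq_zero_and_cos_eq_one_of_sin_half_eq_zero hy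
  obtain ⟨hss, hcs⟩ := sin_eq_zero_and_cos_eq_one_of_sin_half_eq_zero hs
  simp only [iteratedDeriv_sinDiff, iteratedDeriv_two_sin, iteratedDeriv_three_sin, Pi.neg_apply,
    hsx, hcx, hsy, hcy, hss, hcs]
  constructor <;> ring

lemma deriv_sinDiff_zero (a : ℂ) : deriv (sinDiff a) 0 = 0 := by
  simp only [deriv_sinDiff, mul_zero, zero_div, sin_zero]
  ring

lemma iteratedDeriv_three_sinDiff_zero (a : ℂ) :
    iteratedDeriv 3 (sinDiff a) 0 = 3 * (a ^ 2 - a) := by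
  simp only [iteratedDeriv_sinDiff, iteratedDeriv_three_sin, Pi.neg_apply, mul_zero, cos_zero]
  ring

section DoubleRoot

variable {a : ℂ} {Δ : ℂ → ℂ}

lemma iteratedDeriv_succ_sinDiff (hΔ : Differentiable ℂ Δ)
    (hsq : ∀ s, s * Δ (s ^ 2) = sinDiff a s) (n : ℕ) (s : ℂ) :
    iteratedDeriv (n + 1) (sinDiff a) s = (n + 1) * iteratedDeriv n (fun z => Δ (z ^ 2)) s
      + s * iteratedDeriv (n + 1) (fun z => Δ (z ^ 2)) s := by
  rw [← funext hsq]
  exact iteratedDeriv_succ_fun_id_mul ((hΔ.contDiff.comp (contDiff_id.pow 2)).contDiffAt)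

lemma apply_zero_and_deriv_zero_of_mul_comp_sq_eq_sinDiff (hΔ : Differentiable ℂ Δ)
    (hsq : ∀ s, s * Δ (s ^ 2) = sinDiff a s) :
    Δ 0 = 0 ∧ deriv Δ 0 = a * (a - 1) / 2 := by
  have h1 := iteratedDeriv_succ_sinDiff hΔ hsq 0 0
  have h3 := iteratedDeriv_succ_sinDiff hΔ hsq 2 0
  rw [iteratedDeriv_one, deriv_sinDiff_zero] at h1
  rw [iteratedDeriv_three_sinDiff_zero, iteratedDeriv_two_comp_sq hΔ.contDiff] at h3
  norm_num at h1 h3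
  constructor
  · linear_combination -h1
  · linear_combination -h3 / 2

lemma iteratedDeriv_two_and_three_of_double_root (ha : a ≠ 0) (hb : 1 - a ≠ 0)
    (hΔ : Differentiable ℂ Δ) (hsq : ∀ s, s * Δ (s ^ 2) = sinDiff a s) {s : ℂ} (hs : s ≠ 0)
    (h0 : Δ (s ^ 2) = 0) (h1 : deriv Δ (s ^ 2) = 0) :
    iteratedDeriv 2 Δ (s ^ 2) = 0 ∧
      iteratedDeriv 3 Δ (s ^ 2) = 3 * (a ^ 2 - a) / (8 * (s ^ 2) ^ 2) := by
  have hd1 := iteratedDeriv_succ_sinDiff hΔ hsq 0 s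
  have hd2 := iteratedDeriv_succ_sinDiff hΔ hsq 1 s
  have hd3 := iteratedDeriv_succ_sinDiff hΔ hsq 2 s
  rw [iteratedDeriv_one, iteratedDeriv_one, deriv_comp_sq hΔ] at hd1
  rw [iteratedDeriv_one, deriv_comp_sq hΔ, iteratedDeriv_two_comp_sq hΔ.contDiff] at hd2
  rw [iteratedDeriv_two_comp_sq hΔ.contDiff, iteratedDeriv_three_comp_sq hΔ.contDiff] at hd3
  simp only [iteratedDeriv_zero, h0, h1] at hd1 hd2 hd3
  norm_num at hd1 hd2 hd3
  obtain ⟨hx, hy, hz⟩ := sin_half_eq_zero_of_sinDiff_eq_zero ha hb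
    (by rw [← hsq, h0, mul_zero]) hd1
  obtain ⟨h2sin, h3sin⟩ := iteratedDeriv_sinDiff_of_sin_half_eq_zero hx hy hz
  have h2 : iteratedDeriv 2 Δ (s ^ 2) = 0 := by
    have : 4 * s ^ 3 * iteratedDeriv 2 Δ (s ^ 2) = 0 := by linear_combination -hd2 + h2sin
    simpa [hs] using this
  refine ⟨h2, ?_⟩
  rw [h2, h3sin] at hd3
  rw [eq_div_iff (by simp [hs])]
  linear_combination -hd3

end DoubleRoot

theorem stmt11 (a : ℝ) (ha : a ∈ Ioo (0:ℝ) 1)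
    (Δa : ℂ → ℂ) (hΔent : Differentiable ℂ Δa)
    (hΔval : ∀ lam : ℂ, lam ≠ 0 → ∀ s : ℂ, s ^ 2 = lam →
      Δa lam = -(4 / s) * Complex.sin (s * (1 - (a : ℂ)) / 2) *
        Complex.sin (s * (a : ℂ) / 2) * Complex.sin (s / 2)) :
    (∀ lamh : ℂ, lamh ≠ 0 → Δa lamh = 0 → deriv Δa lamh = 0 →
      iteratedDeriv 2 Δa lamh = 0 ∧
      iteratedDeriv 3 Δa lamh = 3 * ((a : ℂ) ^ 2 - (a : ℂ)) / (8 * lamh ^ 2) ∧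
      iteratedDeriv 3 Δa lamh ≠ 0) ∧
    Δa 0 = 0 ∧ deriv Δa 0 = (a : ℂ) * ((a : ℂ) - 1) / 2 ∧ deriv Δa 0 ≠ 0 := by
  have ha0 : (a : ℂ) ≠ 0 := by exact_mod_cast ha.1.ne'
  have ha1 : (a : ℂ) - 1 ≠ 0 := sub_ne_zero.2 (by exact_mod_cast ha.2.ne)
  have hb : 1 - (a : ℂ) ≠ 0 := sub_ne_zero.2 (by exact_mod_cast ha.2.ne')
  have hsq : ∀ s, s * Δa (s ^ 2) = sinDiff a s := by
    intro s
    rcases eq_or_ne s 0 with rfl | hs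
    · simp [sinDiff]
    · rw [hΔval _ (pow_ne_zero 2 hs) s rfl, sinDiff_eq_mul_sin_half]
      field_simp
  obtain ⟨hΔ0, hΔ'0⟩ := apply_zero_and_deriv_zero_of_mul_comp_sq_eq_sinDiff hΔent hsq
  refine ⟨fun lamh hne h0 h1 => ?_, hΔ0, hΔ'0, by simp [hΔ'0, ha0, ha1]⟩
  obtain ⟨s, rfl⟩ := IsAlgClosed.exists_pow_nat_eq lamh two_pos
  have hs : s ≠ 0 := by rintro rfl; simp at hne
  obtain ⟨h2, h3⟩ := iteratedDeriv_two_and_three_of_double_root ha0 hb hΔent hsq hs h0 h1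
  refine ⟨h2, h3, ?_⟩
  rw [h3, show (a : ℂ) ^ 2 - a = a * (a - 1) by ring]
  simp [ha0, ha1, hne]
end
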